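/- For all natural numbers n, the alternating binomial sum over k in ℤ of (-1)^k * C(n, floor((n+5k)/2)) equals F_{n+1}, the (n+1)-st Fibonacci number. -/

import Mathlib

/-- Binomial coefficient `C(n, m)` with an integer lower index, defined to be `0` when `m < 0`
(and automatically `0` when `m > n`). -/
def intChoose (n : ℕ) (m : ℤ) : ℤ := if 0 ≤ m then (n.choose m.toNat : ℤ) else 0

lemma intChoose_eq_zero (n : ℕ) {m : ℤ} (h : m < 0 ∨ (n : ℤ) < m) : intChoose n m = 0 := by
  unfold intChoose
  rcases h with h | h
  · rw [if_neg (by omega)]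
  · rw [if_pos (by omega)]
    rw [Nat.choose_eq_zero_of_lt (by omega)]
    simp

lemma intChoose_symm (n : ℕ) (m : ℤ) : intChoose n m = intChoose n ((n : ℤ) - m) := by
  rcases lt_trichotomy m 0 with h | h | h
  · rw [intChoose_eq_zero n (Or.inl h), intChoose_eq_zero n (Or.inr (by omega))]
  · subst h; simp [intChoose]
  · rcases le_or_gt m n with h2 | h2
    · unfold intChoose
      rw [if_pos (by omega), if_pos (by omega)]
      have : ((n:ℤ) - m).toNat = n - m.toNat := by omega
      rw [this, Nat.choose_symm (by omega)]
    · rw [intChoose_eq_zero n (Or.inr h2), intChoose_eq_zero n (Or.inl (by omega))]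

lemma intChoose_pascal (n : ℕ) (m : ℤ) :
    intChoose (n + 1) m = intChoose n (m - 1) + intChoose n m := by
  rcases lt_trichotomy m 0 with h | h | h
  · rw [intChoose_eq_zero _ (Or.inl h), intChoose_eq_zero n (Or.inl (by omega)),
      intChoose_eq_zero n (Or.inl h)]
    ring
  · subst h; simp [intChoose]
  · unfold intChoose
    rw [if_pos (by omega), if_pos (by omega), if_pos (by omega)]
    have h1 : m.toNat = (m - 1).toNat + 1 := by omega
    rw [h1, Nat.choose_succ_succ]
    push_cast; ring

def term (n : ℕ) (j : ℤ) (k : ℤ) : ℤ :=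
  (-1 : ℤ) ^ k.natAbs * intChoose n (Int.fdiv ((n : ℤ) + 5 * k + j) 2)

lemma fdiv_two (a : ℤ) : a.fdiv 2 = a / 2 := Int.fdiv_eq_ediv_of_nonneg a (by norm_num)

lemma term_eq_zero {n : ℕ} {j k : ℤ} (h : 5 * k + j < -(n : ℤ) ∨ (n : ℤ) + 1 < 5 * k + j) :
    term n j k = 0 := by
  unfold term
  rw [fdiv_two, intChoose_eq_zero n (by omega), mul_zero]

lemma pow_succ_natAbs (k : ℤ) : (-1 : ℤ) ^ ((k + 1).natAbs) = -(-1 : ℤ) ^ (k.natAbs) := by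
  rcases Int.even_or_odd k with h | h
  · rw [(Int.natAbs_even.2 h).neg_one_pow, (Int.natAbs_odd.2 h.add_one).neg_one_pow]
  · rw [(Int.natAbs_odd.2 h).neg_one_pow, (Int.natAbs_even.2 h.add_one).neg_one_pow]
    ring

noncomputable def T (n : ℕ) (j : ℤ) : ℤ := ∑ k ∈ Finset.Icc (-(n : ℤ) - 2) ((n : ℤ) + 2), term n j k

lemma sum_core (n : ℕ) {j : ℤ} (hj : |j| ≤ 3) {a b : ℤ} (ha : a ≤ -(n : ℤ) - 1)
    (hb : (n : ℤ) + 1 ≤ b) :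
    ∑ k ∈ Finset.Icc a b, term n j k =
      ∑ k ∈ Finset.Icc (-(n : ℤ) - 1) ((n : ℤ) + 1), term n j k := by
  refine (Finset.sum_subset ?_ ?_).symm
  · intro k hk; simp only [Finset.mem_Icc] at *; omega
  · intro k hk hk'
    simp only [Finset.mem_Icc] at *
    rw [abs_le] at hj
    apply term_eq_zero
    omega

lemma sum_eq_T (n : ℕ) {j : ℤ} (hj : |j| ≤ 3) {a b : ℤ} (ha : a ≤ -(n : ℤ) - 1)
    (hb : (n : ℤ) + 1 ≤ b) : ∑ k ∈ Finset.Icc a b, term n j k = T n j := by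
  rw [sum_core n hj ha hb]
  unfold T
  exact (sum_core n hj (by omega) (by omega)).symm

lemma T_symm (n : ℕ) {j : ℤ} (hj : |j| ≤ 3) (hj' : |1 - j| ≤ 3) : T n j = T n (1 - j) := by
  unfold T
  refine Finset.sum_nbij' (fun k => -k) (fun k => -k) ?_ ?_ ?_ ?_ ?_
  · intro k hk; simp only [Finset.mem_Icc] at *; omega
  · intro k hk; simp only [Finset.mem_Icc] at *; omega
  · intro k _; ring
  · intro k _; ring
  · intro k _
    simp only [term, Int.natAbs_neg, fdiv_two]
    rw [intChoose_symm]
    congr 2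
    omega

lemma T_neg_two (n : ℕ) : T n (-2) = 0 := by
  have h3 : T n 3 = T n (-2) := by
    have := T_symm n (j := 3) (by norm_num) (by norm_num)
    norm_num at this
    exact this
  have hshift : T n 3 = -T n (-2) := by
    rw [← sum_eq_T n (j := 3) (by norm_num) (a := -(n : ℤ) - 2) (b := (n : ℤ) + 2) (by omega)
      (by omega)]
    rw [← sum_eq_T n (j := -2) (by norm_num) (a := -(n : ℤ) - 1) (b := (n : ℤ) + 3) (by omega)
      (by omega)]
    rw [← Finset.sum_neg_distrib]
    refine Finset.sum_nbij' (fun k => k + 1) (fun k => k - 1) ?_ ?_ ?_ ?_ ?_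
    · intro k hk; simp only [Finset.mem_Icc] at *; omega
    · intro k hk; simp only [Finset.mem_Icc] at *; omega
    · intro k _; ring
    · intro k _; ring
    · intro k _
      simp only [term, pow_succ_natAbs]
      have : (n : ℤ) + 5 * (k + 1) + -2 = (n : ℤ) + 5 * k + 3 := by ring
      rw [this]
      ring
  omega

lemma term_pascal_one (n : ℕ) (k : ℤ) :
    term (n + 1) 0 k = term n (-1) k + term n 1 k := by
  simp only [term, fdiv_two]
  push_cast
  have h0 : ((n : ℤ) + 1 + 5 * k + 0) / 2 = ((n : ℤ) + 5 * k + 1) / 2 := by omega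
  rw [h0, intChoose_pascal]
  have h1 : ((n : ℤ) + 5 * k + 1) / 2 - 1 = ((n : ℤ) + 5 * k + -1) / 2 := by omega
  rw [h1]
  ring

lemma term_pascal_two (n : ℕ) (k : ℤ) :
    term (n + 2) 0 k = term n (-2) k + 2 * term n 0 k + term n 2 k := by
  simp only [term, fdiv_two]
  push_cast
  have h0 : ((n : ℤ) + 2 + 5 * k + 0) / 2 = ((n : ℤ) + 5 * k + 2) / 2 := by omega
  have e2 : (n : ℕ) + 2 = (n + 1) + 1 := by omega
  rw [h0, e2, intChoose_pascal, intChoose_pascal, intChoose_pascal]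
  have h1 : ((n : ℤ) + 5 * k + 2) / 2 - 1 = ((n : ℤ) + 5 * k + 0) / 2 := by omega
  have h2 : ((n : ℤ) + 5 * k + 2) / 2 - 1 - 1 = ((n : ℤ) + 5 * k + -2) / 2 := by omega
  rw [h1] at *
  rw [h2]
  ring

lemma T_rec (n : ℕ) : T (n + 2) 0 = T (n + 1) 0 + T n 0 := by
  have h2 : T (n + 2) 0 = T n (-2) + 2 * T n 0 + T n 2 := by
    rw [← sum_eq_T (n + 2) (j := 0) (by norm_num) (a := -(n : ℤ) - 4) (b := (n : ℤ) + 4)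
        (by push_cast; omega) (by push_cast; omega)]
    rw [← sum_eq_T n (j := -2) (by norm_num) (a := -(n : ℤ) - 4) (b := (n : ℤ) + 4) (by omega)
        (by omega)]
    rw [← sum_eq_T n (j := 0) (by norm_num) (a := -(n : ℤ) - 4) (b := (n : ℤ) + 4) (by omega)
        (by omega)]
    rw [← sum_eq_T n (j := 2) (by norm_num) (a := -(n : ℤ) - 4) (b := (n : ℤ) + 4) (by omega)
        (by omega)]
    rw [Finset.mul_sum, ← Finset.sum_add_distrib, ← Finset.sum_add_distrib]
    exact Finset.sum_congr rfl fun k _ => term_pascal_two n k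
  have h1 : T (n + 1) 0 = T n (-1) + T n 1 := by
    rw [← sum_eq_T (n + 1) (j := 0) (by norm_num) (a := -(n : ℤ) - 4) (b := (n : ℤ) + 4)
        (by push_cast; omega) (by push_cast; omega)]
    rw [← sum_eq_T n (j := -1) (by norm_num) (a := -(n : ℤ) - 4) (b := (n : ℤ) + 4) (by omega)
        (by omega)]
    rw [← sum_eq_T n (j := 1) (by norm_num) (a := -(n : ℤ) - 4) (b := (n : ℤ) + 4) (by omega)
        (by omega)]
    rw [← Finset.sum_add_distrib]
    exact Finset.sum_congr rfl fun k _ => term_pascal_one n k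
  have s0 : T n 0 = T n 1 := by
    have := T_symm n (j := 0) (by norm_num) (by norm_num); norm_num at this; exact this
  have s1 : T n (-1) = T n 2 := by
    have := T_symm n (j := -1) (by norm_num) (by norm_num); norm_num at this; exact this
  have s2 := T_neg_two n
  omega

lemma T_fib : ∀ n : ℕ, T n 0 = ((Nat.fib (n + 1) : ℕ) : ℤ)
  | 0 => by decide
  | 1 => by decide
  | n + 2 => by
      have h1 := T_rec n
      have h2 := T_fib (n + 1)
      have h3 := T_fib n
      have h4 : Nat.fib (n + 2 + 1) = Nat.fib (n + 1) + Nat.fib (n + 1 + 1) := by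
        have e : n + 2 + 1 = n + 1 + 2 := by omega
        rw [e]; exact Nat.fib_add_two
      push_cast at h2 h3 h4 ⊢
      omega

theorem schur_sum_eq_fib_succ (n : ℕ) :
    ∑ᶠ k : ℤ, (-1 : ℤ) ^ k.natAbs * intChoose n (Int.fdiv ((n : ℤ) + 5 * k) 2) =
      (Nat.fib (n + 1) : ℤ) := by
  have hterm : ∀ k : ℤ,
      (-1 : ℤ) ^ k.natAbs * intChoose n (Int.fdiv ((n : ℤ) + 5 * k) 2) = term n 0 k := by
    intro k
    simp [term]
  have hsum : ∑ᶠ k : ℤ, (-1 : ℤ) ^ k.natAbs * intChoose n (Int.fdiv ((n : ℤ) + 5 * k) 2) =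
      ∑ k ∈ Finset.Icc (-(n : ℤ) - 2) ((n : ℤ) + 2),
        (-1 : ℤ) ^ k.natAbs * intChoose n (Int.fdiv ((n : ℤ) + 5 * k) 2) := by
    apply finsum_eq_finset_sum_of_support_subset
    intro k hk
    simp only [Function.mem_support] at hk
    simp only [Finset.coe_Icc, Set.mem_Icc]
    by_contra hc
    apply hk
    rw [hterm k]
    exact term_eq_zero (by omega)
  rw [hsum]
  have : ∑ k ∈ Finset.Icc (-(n : ℤ) - 2) ((n : ℤ) + 2),
      (-1 : ℤ) ^ k.natAbs * intChoose n (Int.fdiv ((n : ℤ) + 5 * k) 2) = T n 0 :=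
    Finset.sum_congr rfl fun k _ => hterm k
  rw [this, T_fib n]
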